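/- Let K be a field, let G and H be groups, and let δ : H → G be a group homomorphism. Let f : G → K be a function that is represented by some triple (V, v, s). Then f is invariant under left translation by δ(H) (i.e., f(δ(h)·g) = f(g) for all h ∈ H and g ∈ G) if and only if f can be represented by a triple (V', v', s') in which s' is H-invariant, meaning s'(ρ'(δ(h))(w)) = s'(w) for every h ∈ H and w ∈ V', where ρ' is the G-action on V'. -/
import Mathlib


universe u

/-- A matrix coefficient `f(g) = s(ρ(g) v)` on a group `G` is
invariant under left translation by `δ(H)` if and only if it can be
represented by a triple `(V', v', s')` in which the functional `s'` is
`H`-invariant. -/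
theorem left_invariant_iff_invariant_functional
    {K : Type u} [Field K] {G : Type u} [Group G] {H : Type u} [Group H]
    (δ : H →* G) (f : G → K)
    (V : Type u) [AddCommGroup V] [Module K V] [FiniteDimensional K V]
    (ρ : Representation K G V) (v : V) (s : V →ₗ[K] K)
    (hrep : ∀ g : G, f g = s (ρ g v)) :
    (∀ (h : H) (g : G), f (δ h * g) = f g) ↔
      ∃ (V' : Type u) (_ : AddCommGroup V') (_ : Module K V')
        (_ : FiniteDimensional K V') (ρ' : Representation K G V') (v' : V')
        (s' : V' →ₗ[K] K),
        (∀ g : G, f g = s' (ρ' g v')) ∧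
        (∀ (h : H) (w : V'), s' (ρ' (δ h) w) = s' w) := by
  constructor
  · intro hinv
    set W : Submodule K V := Submodule.span K (Set.range fun g => ρ g v) with hWdef
    have hmaps : ∀ g : G, ∀ w ∈ W, ρ g w ∈ W := by
      intro g w hw
      induction hw using Submodule.span_induction with
      | mem x hx =>
        obtain ⟨g', rfl⟩ := hx
        have : ρ g (ρ g' v) = ρ (g * g') v := by
          rw [map_mul]; rfl
        rw [this]
        exact Submodule.subset_span ⟨g * g', rfl⟩
      | zero => simp
      | add x y _ _ hx hy => rw [map_add]; exact W.add_mem hx hy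
      | smul c x _ hx => rw [map_smul]; exact W.smul_mem c hx
    let ρ' : Representation K G W :=
      { toFun := fun g => (ρ g).restrict (fun w hw => hmaps g w hw)
        map_one' := by
          ext w
          simp [LinearMap.restrict_apply]
        map_mul' := by
          intro g₁ g₂
          ext w
          simp [LinearMap.restrict_apply] }
    have hρ' : ∀ (g : G) (w : W), ((ρ' g w : W) : V) = ρ g (w : V) := fun g w => rfl
    have hv : v ∈ W := by
      have : ρ (1 : G) v = v := by simp
      exact this ▸ Submodule.subset_span ⟨1, rfl⟩
    refine ⟨W, inferInstance, inferInstance, inferInstance, ρ', ⟨v, hv⟩,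
      s.comp W.subtype, ?_, ?_⟩
    · intro g
      rw [hrep g]
      rfl
    · intro h w
      obtain ⟨w, hw⟩ := w
      simp only [LinearMap.comp_apply, Submodule.subtype_apply, hρ']
      induction hw using Submodule.span_induction with
      | mem x hx =>
        obtain ⟨g', rfl⟩ := hx
        have : ρ (δ h) (ρ g' v) = ρ (δ h * g') v := by rw [map_mul]; rfl
        rw [this, ← hrep, ← hrep, hinv]
      | zero => simp
      | add x y _ _ hx hy => simp only [map_add, hx, hy]
      | smul c x _ hx => simp only [map_smul, smul_eq_mul, hx]
  · rintro ⟨V', _, _, _, ρ', v', s', hrep', hs'⟩ h g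
    rw [hrep', hrep', map_mul]
    exact hs' h (ρ' g v')
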